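/- Let N' be an orchard binary phylogenetic network obtained from a network N by adding ℓ leaves to reticulation arcs of N. Then the restriction to the vertices of N of any HGT-consistent labelling of N' is a non-temporal labelling of N with at most ℓ inrets; in particular V_OR(N) ≤ L_OR(N). -/

import Mathlib

namespace PhyloNet

/-- A binary phylogenetic network, encoded on vertex set `verts ⊆ ℕ`. -/
structure Network where
  verts : Finset ℕ
  arc : ℕ → ℕ → Bool
  root : ℕ
  root_mem : root ∈ verts
  arc_mem : ∀ u v : ℕ, arc u v = true → u ∈ verts ∧ v ∈ verts
  acyclic : ∀ v : ℕ, ¬ Relation.TransGen (fun a b : ℕ => arc a b = true) v v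
  root_indeg : (verts.filter fun u => arc u root = true).card = 0
  root_outdeg : (verts.filter fun w => arc root w = true).card = 1
  nonroot_deg : ∀ v ∈ verts, v ≠ root →
    ((verts.filter fun u => arc u v = true).card = 1 ∧
      (verts.filter fun w => arc v w = true).card = 2) ∨
    ((verts.filter fun u => arc u v = true).card = 2 ∧
      (verts.filter fun w => arc v w = true).card = 1) ∨
    ((verts.filter fun u => arc u v = true).card = 1 ∧
      (verts.filter fun w => arc v w = true).card = 0)

def inDeg (N : Network) (v : ℕ) : ℕ := (N.verts.filter fun u => N.arc u v = true).card

def outDeg (N : Network) (v : ℕ) : ℕ := (N.verts.filter fun w => N.arc v w = true).card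

def IsLeaf (N : Network) (v : ℕ) : Prop := v ∈ N.verts ∧ inDeg N v = 1 ∧ outDeg N v = 0

def IsRet (N : Network) (v : ℕ) : Prop := v ∈ N.verts ∧ inDeg N v = 2

def IsTreeVert (N : Network) (v : ℕ) : Prop := v ∈ N.verts ∧ inDeg N v = 1 ∧ outDeg N v = 2

def IsInternal (N : Network) (v : ℕ) : Prop := v ∈ N.verts ∧ v ≠ N.root ∧ ¬ IsLeaf N v

def IsTree (N : Network) : Prop := ∀ v : ℕ, ¬ IsRet N v

noncomputable def retCount (N : Network) : ℕ := {v : ℕ | IsRet N v}.ncard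

/-- Tree-child: every non-leaf vertex has a child that is a tree vertex or a leaf. -/
def IsTreeChild (N : Network) : Prop :=
  ∀ v ∈ N.verts, ¬ IsLeaf N v → ∃ w : ℕ, N.arc v w = true ∧ (IsTreeVert N w ∨ IsLeaf N w)

/-- An omnian: an internal vertex all of whose children are reticulations. -/
def IsOmnian (N : Network) (v : ℕ) : Prop :=
  IsInternal N v ∧ ∀ w : ℕ, N.arc v w = true → IsRet N w

noncomputable def omnianCount (N : Network) : ℕ := {v : ℕ | IsOmnian N v}.ncard

/-- `N'` is obtained from `N` by adding a leaf to the arc `uv`: the arc is subdivided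
by a fresh vertex `w`, and a fresh leaf `x` is attached to `w`. -/
def IsLeafAdditionOn (N N' : Network) (u v : ℕ) : Prop :=
  N.arc u v = true ∧ ∃ w x : ℕ, w ∉ N.verts ∧ x ∉ N.verts ∧ w ≠ x ∧
    N'.verts = insert w (insert x N.verts) ∧ N'.root = N.root ∧
    ∀ a b : ℕ, (N'.arc a b = true ↔
      ((N.arc a b = true ∧ ¬ (a = u ∧ b = v)) ∨ (a = u ∧ b = w) ∨
        (a = w ∧ b = v) ∨ (a = w ∧ b = x)))

def IsLeafAddition (N N' : Network) : Prop := ∃ u v : ℕ, IsLeafAdditionOn N N' u v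

/-- `N'` is obtained from `N` by adding a leaf to a reticulation arc. -/
def IsRetArcLeafAddition (N N' : Network) : Prop :=
  ∃ u v : ℕ, IsRet N v ∧ IsLeafAdditionOn N N' u v

/-- `P` holds after exactly `k` steps of relation `step` starting from `N`. -/
def ReachableBy (step : Network → Network → Prop) (N : Network) (k : ℕ)
    (P : Network → Prop) : Prop :=
  ∃ M : ℕ → Network, M 0 = N ∧ (∀ i : ℕ, i < k → step (M i) (M (i + 1))) ∧ P (M k)

/-- The minimum number of leaf additions needed to bring `N` into the class `P`. -/
noncomputable def leafAddDist (P : Network → Prop) (N : Network) : ℕ :=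
  sInf {k : ℕ | ReachableBy IsLeafAddition N k P}

noncomputable def LTC (N : Network) : ℕ := leafAddDist IsTreeChild N

/-- Reduction of a cherry (x,y): delete the leaf x and suppress its parent p
(whose own parent is q, gaining the arc q → y). -/
def ReducesCherry (N N' : Network) (x y : ℕ) : Prop :=
  ∃ p q : ℕ, IsLeaf N x ∧ IsLeaf N y ∧ x ≠ y ∧
    N.arc p x = true ∧ N.arc p y = true ∧ N.arc q p = true ∧
    N'.verts = (N.verts.erase x).erase p ∧ N'.root = N.root ∧
    ∀ a b : ℕ, (N'.arc a b = true ↔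
      (N.arc a b = true ∧ a ≠ p ∧ b ≠ p ∧ b ≠ x) ∨ (a = q ∧ b = y))

/-- Reduction of a reticulated cherry (x,y): delete the arc from the parent p_y of y
to the reticulation parent p_x of x, and clean up (suppressing p_x and p_y). -/
def ReducesRetCherry (N N' : Network) (x y : ℕ) : Prop :=
  ∃ px py z q : ℕ, IsLeaf N x ∧ IsLeaf N y ∧ IsRet N px ∧
    N.arc px x = true ∧ N.arc py px = true ∧ N.arc py y = true ∧
    N.arc z px = true ∧ z ≠ py ∧ N.arc q py = true ∧
    N'.verts = (N.verts.erase px).erase py ∧ N'.root = N.root ∧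
    ∀ a b : ℕ, (N'.arc a b = true ↔
      (N.arc a b = true ∧ a ≠ px ∧ a ≠ py ∧ b ≠ px ∧ b ≠ py) ∨
        (a = z ∧ b = x) ∨ (a = q ∧ b = y))

def CherryStep (N N' : Network) : Prop :=
  ∃ x y : ℕ, ReducesCherry N N' x y ∨ ReducesRetCherry N N' x y

/-- A network consisting of the root and a single leaf. -/
def IsSingleLeaf (N : Network) : Prop := ∃ x : ℕ, x ≠ N.root ∧ N.verts = {N.root, x}

/-- Orchard: reducible to a single leaf by cherry and reticulated cherry reductions. -/
def IsOrchard (N : Network) : Prop :=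
  ∃ N' : Network, Relation.ReflTransGen CherryStep N N' ∧ IsSingleLeaf N'

noncomputable def LOR (N : Network) : ℕ := leafAddDist IsOrchard N

/-- Tree-based: there is a spanning tree (a choice of one incoming arc for each
non-root vertex) all of whose leaves are leaves of `N`. -/
def IsTreeBased (N : Network) : Prop :=
  ∃ T : ℕ → ℕ → Bool, (∀ u v : ℕ, T u v = true → N.arc u v = true) ∧
    (∀ v ∈ N.verts, v ≠ N.root → (N.verts.filter fun u => T u v = true).card = 1) ∧
    (∀ v ∈ N.verts, ¬ IsLeaf N v → ∃ w : ℕ, T v w = true)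

noncomputable def LTB (N : Network) : ℕ := leafAddDist IsTreeBased N

/-- A zig-zag trail: a nonempty duplicate-free sequence of arcs in which
consecutive arcs share a tail or share a head. -/
def IsZigZag (N : Network) (s : List (ℕ × ℕ)) : Prop :=
  s ≠ [] ∧ s.Nodup ∧ (∀ a ∈ s, N.arc a.1 a.2 = true) ∧
    List.Chain' (fun a b : ℕ × ℕ => a.1 = b.1 ∨ a.2 = b.2) s

def IsMaximalZigZag (N : Network) (s : List (ℕ × ℕ)) : Prop :=
  IsZigZag N s ∧ ∀ t : List (ℕ × ℕ), IsZigZag N t → s.Sublist t → t.length = s.length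

/-- A W-fence: a maximal zig-zag trail of even length whose two end-arc tails
are both reticulations. -/
def IsWFence (N : Network) (s : List (ℕ × ℕ)) : Prop :=
  IsMaximalZigZag N s ∧ s.length % 2 = 0 ∧ 2 ≤ s.length ∧
    IsRet N (s.headD (0, 0)).1 ∧ IsRet N (s.getLastD (0, 0)).1

/-- An N-fence: a maximal zig-zag trail of odd length exactly one of whose
end-arc tails is a reticulation. -/
def IsNFence (N : Network) (s : List (ℕ × ℕ)) : Prop :=
  IsMaximalZigZag N s ∧ s.length % 2 = 1 ∧
    Xor' (IsRet N (s.headD (0, 0)).1) (IsRet N (s.getLastD (0, 0)).1)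

/-- A zig-zag decomposition: a set of maximal zig-zag trails partitioning the
non-root arcs of the network. -/
def IsZigZagDecomposition (N : Network) (D : Set (List (ℕ × ℕ))) : Prop :=
  (∀ s ∈ D, IsMaximalZigZag N s) ∧
  (∀ s ∈ D, ∀ p ∈ s, p.1 ≠ N.root) ∧
  (∀ a b : ℕ, N.arc a b = true → a ≠ N.root → ∃! s : List (ℕ × ℕ), s ∈ D ∧ (a, b) ∈ s)

/-- A cherry shape: two arcs with a common tail. -/
def IsCherryShape (N : Network) (s : Set (ℕ × ℕ)) : Prop :=
  ∃ p x y : ℕ, x ≠ y ∧ N.arc p x = true ∧ N.arc p y = true ∧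
    s = {(p, x), (p, y)}

/-- A reticulated cherry shape: arcs p_x x, p_y p_x, p_y y where p_x is a reticulation;
its middle arc is p_y p_x. -/
def IsRetCherryShape (N : Network) (s : Set (ℕ × ℕ)) : Prop :=
  ∃ x y px py : ℕ, IsRet N px ∧ N.arc px x = true ∧ N.arc py px = true ∧
    N.arc py y = true ∧ y ≠ px ∧ s = {(px, x), (py, px), (py, y)}

/-- `s` is a reticulated cherry shape with middle arc `(u, r)`. -/
def IsMiddleArcOf (N : Network) (s : Set (ℕ × ℕ)) (u r : ℕ) : Prop :=
  ∃ x y : ℕ, IsRet N r ∧ N.arc r x = true ∧ N.arc u r = true ∧ N.arc u y = true ∧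
    y ≠ r ∧ s = {(r, x), (u, r), (u, y)}

/-- A cherry cover: cherry shapes and reticulated cherry shapes covering every
non-root arc exactly once. -/
def IsCherryCover (N : Network) (P : Set (Set (ℕ × ℕ))) : Prop :=
  (∀ s ∈ P, IsCherryShape N s ∨ IsRetCherryShape N s) ∧
  (∀ a b : ℕ, N.arc a b = true → a ≠ N.root →
    ∃! s : Set (ℕ × ℕ), s ∈ P ∧ (a, b) ∈ s)

/-- The internal vertices of a shape are the tails of its arcs. -/
def shapeInternals (s : Set (ℕ × ℕ)) : Set ℕ := {p : ℕ | ∃ x : ℕ, (p, x) ∈ s}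

/-- The endpoints of a shape: heads of its arcs that are not tails of its arcs. -/
def shapeEndpoints (s : Set (ℕ × ℕ)) : Set ℕ :=
  {x : ℕ | (∃ p : ℕ, (p, x) ∈ s) ∧ ∀ y : ℕ, (x, y) ∉ s}

/-- In the auxiliary graph, shape `B` is directly above shape `C` if an internal
vertex of `C` is an endpoint of `B`. -/
def DirectlyAbove (B C : Set (ℕ × ℕ)) : Prop :=
  ∃ v : ℕ, v ∈ shapeEndpoints B ∧ v ∈ shapeInternals C

/-- The auxiliary graph of the cherry cover `P` contains a directed cycle. -/
def HasCyclicAux (P : Set (Set (ℕ × ℕ))) : Prop :=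
  ∃ s ∈ P, Relation.TransGen
    (fun B C : Set (ℕ × ℕ) => B ∈ P ∧ C ∈ P ∧ DirectlyAbove B C) s s

/-- A non-temporal labelling of `N`. -/
def IsNonTemporal (N : Network) (t : ℕ → ℝ) : Prop :=
  (∀ u v : ℕ, N.arc u v = true → t u ≤ t v) ∧
  (∀ u v : ℕ, N.arc u v = true → t u = t v → IsRet N v) ∧
  (∀ u : ℕ, IsInternal N u → ∃ v : ℕ, N.arc u v = true ∧ t u < t v) ∧
  (∀ r u v : ℕ, IsRet N r → N.arc u r = true → N.arc v r = true → u ≠ v →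
    ¬ (t u = t r ∧ t v = t r))

/-- An inret: a reticulation with no incoming horizontal arc
(i.e. both incoming arcs vertical). -/
def Inret (N : Network) (t : ℕ → ℝ) (r : ℕ) : Prop :=
  IsRet N r ∧ ∀ u : ℕ, N.arc u r = true → t u ≠ t r

noncomputable def inretCount (N : Network) (t : ℕ → ℝ) : ℕ := {r : ℕ | Inret N t r}.ncard

/-- HGT-consistent labelling: a non-temporal labelling in which every reticulation
has exactly one incoming horizontal arc. -/
def IsHGTConsistent (N : Network) (t : ℕ → ℝ) : Prop :=
  IsNonTemporal N t ∧ ∀ r : ℕ, IsRet N r → ∃! u : ℕ, N.arc u r = true ∧ t u = t r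

/-- V_OR: the minimum number of inrets over all non-temporal labellings. -/
noncomputable def VOR (N : Network) : ℕ :=
  sInf {k : ℕ | ∃ t : ℕ → ℝ, IsNonTemporal N t ∧ inretCount N t = k}

/-- The network `N` is the result of the vertex-cover reduction applied to `G`. -/
def IsVCReduction {α : Type} [Fintype α] [DecidableEq α] (G : SimpleGraph α)
    (N : Network) : Prop :=
  ∃ (R W L M : α → ℕ → ℕ) (P : α → ℕ) (S : ℕ → ℕ) (rho : ℕ)
    (e : ℕ → α) (pi tau : α → α → ℕ),
    (∀ v : α, ∃! i : ℕ, 1 ≤ i ∧ i ≤ Fintype.card α ∧ e i = v) ∧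
    (∀ v u : α, G.Adj v u → pi v u ∈ ({1, 2, 3} : Set ℕ)) ∧
    (∀ v u u' : α, G.Adj v u → G.Adj v u' → pi v u = pi v u' → u = u') ∧
    (∀ v u : α, G.Adj v u → tau v u ∈ ({5, 6, 7} : Set ℕ)) ∧
    (∀ v u u' : α, G.Adj v u → G.Adj v u' → tau v u = tau v u' → u = u') ∧
    Function.Injective
      (fun z : (α × Fin 8) ⊕ (α × Fin 7) ⊕ (α × Fin 5) ⊕ (α × Fin 4) ⊕ α ⊕
          (Fin (Fintype.card α - 1)) ⊕ Unit =>
        match z with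
        | Sum.inl (v, i) => R v i.1
        | Sum.inr (Sum.inl (v, i)) => W v (i.1 + 1)
        | Sum.inr (Sum.inr (Sum.inl (v, i))) => L v (i.1 + 1)
        | Sum.inr (Sum.inr (Sum.inr (Sum.inl (v, i)))) => M v (i.1 + 1)
        | Sum.inr (Sum.inr (Sum.inr (Sum.inr (Sum.inl v)))) => P v
        | Sum.inr (Sum.inr (Sum.inr (Sum.inr (Sum.inr (Sum.inl i))))) => S (i.1 + 1)
        | Sum.inr (Sum.inr (Sum.inr (Sum.inr (Sum.inr (Sum.inr _))))) => rho) ∧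
    N.root = rho ∧
    (∀ x : ℕ, x ∈ N.verts ↔
      (∃ v i, i ≤ 7 ∧ x = R v i) ∨ (∃ v i, 1 ≤ i ∧ i ≤ 7 ∧ x = W v i) ∨
      (∃ v i, 1 ≤ i ∧ i ≤ 5 ∧ x = L v i) ∨ (∃ v i, 1 ≤ i ∧ i ≤ 4 ∧ x = M v i) ∨
      (∃ v, x = P v) ∨ (∃ i, 1 ≤ i ∧ i ≤ Fintype.card α - 1 ∧ x = S i) ∨ x = rho) ∧
    (∀ a b : ℕ, N.arc a b = true ↔
      (a = rho ∧ b = S 1) ∨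
      (∃ i, 1 ≤ i ∧ i ≤ Fintype.card α - 2 ∧ a = S i ∧ b = S (i + 1)) ∨
      (∃ i, 1 ≤ i ∧ i ≤ Fintype.card α - 1 ∧ a = S i ∧ b = P (e i)) ∨
      (a = S (Fintype.card α - 1) ∧ b = P (e (Fintype.card α))) ∨
      (∃ v, a = P v ∧ (b = M v 4 ∨ b = W v 7)) ∨
      (∃ v, a = M v 4 ∧ (b = M v 3 ∨ b = R v 0)) ∨
      (∃ v, a = M v 3 ∧ (b = M v 2 ∨ b = W v 6)) ∨
      (∃ v, a = M v 2 ∧ (b = M v 1 ∨ b = W v 5)) ∨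
      (∃ v, a = M v 1 ∧ (b = R v 0 ∨ b = W v 4)) ∨
      (∃ v, a = R v 0 ∧ b = R v 1) ∨
      (∃ v i, 1 ≤ i ∧ i ≤ 6 ∧ a = W v i ∧ (b = R v i ∨ b = R v (i + 1))) ∨
      (∃ v, a = W v 7 ∧ (b = R v 7 ∨ b = L v 5)) ∨
      (∃ v i, 1 ≤ i ∧ i ≤ 4 ∧ a = R v i ∧ b = L v i) ∨
      (∃ u v, G.Adj u v ∧ a = R u (tau u v) ∧ b = W v (pi v u)))


/-! Removing a leaf that was added on an arc `uv` preserves non-temporality: the subdivision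
vertex `w` has a single parent, so `t u < t w ≤ t v` and the restored arc `uv` is vertical.
Only `v` can lose its horizontal incoming arc, so each removal creates at most one inret, and an
HGT-consistent labelling (which has no inrets) of the orchard network restricts to a labelling of
`N` with at most `ℓ` inrets.

For `V_OR(N) ≤ L_OR(N)` one also needs an HGT-consistent labelling of every orchard network. It is
built backwards along a cherry-picking sequence: undoing a reduction only changes the labels of
the few vertices it touches, which are placed just above their parents outside the cherry; the
middle arc of a reticulated cherry is made horizontal. -/

section Basic

variable {N : Network} {a b c c₁ c₂ p₁ p₂ q v : ℕ}

lemma ne_of_arc (h : N.arc a b = true) : a ≠ b := by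
  rintro rfl
  exact N.acyclic a (.single h)

lemma mem_parents_iff : a ∈ N.verts.filter (fun u => N.arc u v = true) ↔ N.arc a v = true :=
  ⟨fun h => (Finset.mem_filter.mp h).2, fun h => Finset.mem_filter.mpr ⟨(N.arc_mem _ _ h).1, h⟩⟩

lemma mem_children_iff : b ∈ N.verts.filter (fun w => N.arc v w = true) ↔ N.arc v b = true :=
  ⟨fun h => (Finset.mem_filter.mp h).2, fun h => Finset.mem_filter.mpr ⟨(N.arc_mem _ _ h).2, h⟩⟩

lemma not_arc_root : N.arc a N.root ≠ true := by
  intro h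
  have := Finset.card_pos.mpr ⟨a, mem_parents_iff.mpr h⟩
  have := N.root_indeg
  omega

lemma ne_root_of_arc (h : N.arc a v = true) : v ≠ N.root := by
  rintro rfl
  exact not_arc_root h

lemma IsLeaf.not_arc (hv : IsLeaf N v) : N.arc v b ≠ true := by
  intro h
  have := Finset.card_pos.mpr ⟨b, mem_children_iff.mpr h⟩
  have := hv.2.2
  unfold outDeg at this
  omega

lemma IsLeaf.ne_of_arc (hv : IsLeaf N v) (h : N.arc a b = true) : a ≠ v := by
  rintro rfl
  exact hv.not_arc h

lemma eq_of_inDeg_eq_one (hv : inDeg N v = 1) (ha : N.arc a v = true)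
    (hb : N.arc b v = true) : a = b :=
  Finset.card_le_one.mp hv.le a (mem_parents_iff.mpr ha) b (mem_parents_iff.mpr hb)

lemma eq_of_outDeg_eq_one (hv : outDeg N v = 1) (ha : N.arc v a = true)
    (hb : N.arc v b = true) : a = b :=
  Finset.card_le_one.mp hv.le a (mem_children_iff.mpr ha) b (mem_children_iff.mpr hb)

lemma eq_or_eq_of_card_eq_two {α : Type*} [DecidableEq α] {s : Finset α} {x y z : α}
    (hs : s.card = 2) (hx : x ∈ s) (hy : y ∈ s) (hxy : x ≠ y) (hz : z ∈ s) : z = x ∨ z = y := by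
  obtain ⟨a, b, -, rfl⟩ := Finset.card_eq_two.mp hs
  simp only [Finset.mem_insert, Finset.mem_singleton] at hx hy hz
  grind

lemma eq_or_eq_of_outDeg_eq_two (hv : outDeg N v = 2) (h₁ : N.arc v c₁ = true)
    (h₂ : N.arc v c₂ = true) (hc : c₁ ≠ c₂) (h : N.arc v c = true) : c = c₁ ∨ c = c₂ :=
  eq_or_eq_of_card_eq_two hv (mem_children_iff.mpr h₁) (mem_children_iff.mpr h₂) hc
    (mem_children_iff.mpr h)

lemma IsRet.eq_or_eq_of_arc (hv : IsRet N v) (h₁ : N.arc p₁ v = true)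
    (h₂ : N.arc p₂ v = true) (hp : p₁ ≠ p₂) (h : N.arc a v = true) : a = p₁ ∨ a = p₂ :=
  eq_or_eq_of_card_eq_two hv.2 (mem_parents_iff.mpr h₁) (mem_parents_iff.mpr h₂) hp
    (mem_parents_iff.mpr h)

lemma IsRet.ne_root (hv : IsRet N v) : v ≠ N.root := by
  rintro rfl
  have := hv.2
  have := N.root_indeg
  unfold inDeg at *
  omega

lemma isRet_iff_exists_ne_parents :
    IsRet N v ↔ ∃ a b, a ≠ b ∧ N.arc a v = true ∧ N.arc b v = true := by
  constructor
  · intro hv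
    obtain ⟨a, ha, b, hb, hab⟩ := Finset.one_lt_card.mp (show 1 < inDeg N v by rw [hv.2]; omega)
    exact ⟨a, b, hab, mem_parents_iff.mp ha, mem_parents_iff.mp hb⟩
  · rintro ⟨a, b, hab, ha, hb⟩
    have hv := (N.arc_mem _ _ ha).2
    have h2 : 1 < inDeg N v := Finset.one_lt_card.mpr
      ⟨a, mem_parents_iff.mpr ha, b, mem_parents_iff.mpr hb, hab⟩
    refine ⟨hv, ?_⟩
    rcases N.nonroot_deg v hv (ne_root_of_arc ha) with h | h | h <;> unfold inDeg at * <;> omega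

lemma not_isRet_of_forall_parent_eq (h : ∀ a, N.arc a v = true → a = q) : ¬ IsRet N v := by
  rw [isRet_iff_exists_ne_parents]
  rintro ⟨a, b, hab, ha, hb⟩
  exact hab ((h a ha).trans (h b hb).symm)

lemma IsLeaf.not_isRet (hv : IsLeaf N v) : ¬ IsRet N v := fun h => by
  have := h.2
  have := hv.2.1
  omega

lemma IsTreeVert.not_isRet (hv : IsTreeVert N v) : ¬ IsRet N v := fun h => by
  have := h.2
  have := hv.2.1
  omega

lemma IsRet.outDeg_eq_one (hv : IsRet N v) : outDeg N v = 1 := by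
  have := hv.2
  rcases N.nonroot_deg v hv.1 hv.ne_root with h | h | h <;> unfold inDeg outDeg at * <;> omega

lemma isTreeVert_of_arc_of_ne_children (hq : N.arc q v = true) (h₁ : N.arc v c₁ = true)
    (h₂ : N.arc v c₂ = true) (hc : c₁ ≠ c₂) : IsTreeVert N v := by
  refine ⟨(N.arc_mem _ _ hq).2, ?_⟩
  have h2 : 1 < outDeg N v := Finset.one_lt_card.mpr
    ⟨c₁, mem_children_iff.mpr h₁, c₂, mem_children_iff.mpr h₂, hc⟩
  rcases N.nonroot_deg v (N.arc_mem _ _ hq).2 (ne_root_of_arc hq) with h | h | h <;>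
    unfold inDeg outDeg at * <;> omega

lemma IsInternal.exists_arc (hv : IsInternal N v) : ∃ c, N.arc v c = true := by
  obtain ⟨hmem, hroot, hleaf⟩ := hv
  rcases N.nonroot_deg v hmem hroot with ⟨-, h⟩ | ⟨-, h⟩ | ⟨h₁, h₂⟩
  · obtain ⟨c, hc⟩ := Finset.card_pos.mp (show 0 < outDeg N v by unfold outDeg; omega)
    exact ⟨c, mem_children_iff.mp hc⟩
  · obtain ⟨c, hc⟩ := Finset.card_pos.mp (show 0 < outDeg N v by unfold outDeg; omega)
    exact ⟨c, mem_children_iff.mp hc⟩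
  · exact absurd ⟨hmem, h₁, h₂⟩ hleaf

end Basic

lemma IsNonTemporal.lt_of_arc_of_not_isRet {N : Network} {t : ℕ → ℝ} {a b : ℕ}
    (ht : IsNonTemporal N t) (hab : N.arc a b = true) (hb : ¬ IsRet N b) : t a < t b :=
  (ht.1 a b hab).lt_of_ne fun he => hb (ht.2.1 a b hab he)

section LeafAddition

variable {N N' : Network} {u v a b : ℕ} {t : ℕ → ℝ}

lemma IsLeafAdditionOn.arc_of_arc (h : IsLeafAdditionOn N N' u v) (hab : N.arc a b = true)
    (hne : ¬ (a = u ∧ b = v)) : N'.arc a b = true := by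
  obtain ⟨-, w, x, -, -, -, -, -, harc⟩ := h
  exact (harc a b).mpr (Or.inl ⟨hab, hne⟩)

lemma IsLeafAdditionOn.isRet_iff (h : IsLeafAdditionOn N N' u v) (hb : b ∈ N.verts) :
    IsRet N' b ↔ IsRet N b := by
  obtain ⟨huv, w, x, hw, hx, -, -, -, harc⟩ := h
  have hpar : ∀ a, N'.arc a b = true ↔ (N.arc a b = true ∧ ¬ (a = u ∧ b = v)) ∨
      (a = w ∧ b = v) := fun a => by grind
  have hwN : ∀ a, N.arc a b = true → a ≠ w := fun a ha => by
    rintro rfl; exact hw (N.arc_mem _ _ ha).1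
  simp only [isRet_iff_exists_ne_parents, hpar]
  -- the parents of `b` in `N'` are those in `N`, except that `w` replaces `u` when `b = v`
  constructor
  · rintro ⟨a₁, a₂, hne, h₁, h₂⟩
    refine ⟨if a₁ = w then u else a₁, if a₂ = w then u else a₂, ?_, ?_, ?_⟩ <;> grind
  · rintro ⟨a₁, a₂, hne, h₁, h₂⟩
    refine ⟨if a₁ = u ∧ b = v then w else a₁, if a₂ = u ∧ b = v then w else a₂, ?_, ?_, ?_⟩ <;>
      grind

lemma IsLeafAdditionOn.lt_of_isNonTemporal (h : IsLeafAdditionOn N N' u v)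
    (ht : IsNonTemporal N' t) : t u < t v := by
  obtain ⟨huv, w, x, hw, -, hwx, -, -, harc⟩ := h
  have huw : N'.arc u w = true := (harc u w).mpr (by simp)
  have hwv : N'.arc w v = true := (harc w v).mpr (by simp)
  have hw_ret : ¬ IsRet N' w := not_isRet_of_forall_parent_eq (q := u) fun a ha => by
    rcases (harc a w).mp ha with ⟨haw, -⟩ | ⟨rfl, -⟩ | ⟨-, rfl⟩ | ⟨-, h⟩
    · exact absurd (N.arc_mem _ _ haw).2 hw
    · rfl
    · exact absurd (N.arc_mem _ _ huv).2 hw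
    · exact absurd h hwx
  exact (ht.lt_of_arc_of_not_isRet huw hw_ret).trans_le (ht.1 w v hwv)

lemma IsLeafAdditionOn.isInternal (h : IsLeafAdditionOn N N' u v) (ha : IsInternal N a) :
    IsInternal N' a := by
  obtain ⟨c, hc⟩ := ha.exists_arc
  obtain ⟨-, w, x, -, -, -, hverts, hroot, harc⟩ := h
  have hd : ∃ d, N'.arc a d = true := by
    by_cases hac : a = u ∧ c = v
    · exact ⟨w, (harc a w).mpr (by simp [hac.1])⟩
    · exact ⟨c, (harc a c).mpr (Or.inl ⟨hc, hac⟩)⟩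
  obtain ⟨d, hd⟩ := hd
  exact ⟨by simp [hverts, ha.1], hroot ▸ ha.2.1, fun hl => hl.not_arc hd⟩

lemma IsNonTemporal.of_isLeafAdditionOn (h : IsLeafAdditionOn N N' u v)
    (ht : IsNonTemporal N' t) : IsNonTemporal N t := by
  have huv := h.lt_of_isNonTemporal ht
  have harc : ∀ a b, N.arc a b = true → t a = t b → N'.arc a b = true := fun a b hab he =>
    h.arc_of_arc hab fun ⟨hau, hbv⟩ => huv.ne (hau ▸ hbv ▸ he)
  refine ⟨fun a b hab => ?_, fun a b hab he => ?_, fun a ha => ?_, ?_⟩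
  · by_cases hc : a = u ∧ b = v
    · exact hc.1 ▸ hc.2 ▸ huv.le
    · exact ht.1 a b (h.arc_of_arc hab hc)
  · exact (h.isRet_iff (N.arc_mem _ _ hab).2).mp (ht.2.1 a b (harc a b hab he) he)
  · obtain ⟨c, hc, hlt⟩ := ht.2.2.1 a (h.isInternal ha)
    obtain ⟨hav, w, x, hw, -, -, -, -, harc'⟩ := h
    rcases (harc' a c).mp hc with ⟨hc, -⟩ | ⟨rfl, rfl⟩ | ⟨rfl, -⟩ | ⟨rfl, -⟩
    · exact ⟨c, hc, hlt⟩
    · exact ⟨v, hav, hlt.trans_le (ht.1 _ _ ((harc' _ v).mpr (by simp)))⟩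
    all_goals exact absurd ha.1 hw
  · intro r a b hr ha hb hab ⟨har, hbr⟩
    exact ht.2.2.2 r a b ((h.isRet_iff hr.1).mpr hr) (harc a r ha har) (harc b r hb hbr) hab
      ⟨har, hbr⟩

lemma IsLeafAdditionOn.inretCount_le (h : IsLeafAdditionOn N N' u v) (t : ℕ → ℝ) :
    inretCount N t ≤ inretCount N' t + 1 := by
  have hsub : {r | Inret N t r} ⊆ insert v {r | Inret N' t r} := by
    rintro r ⟨hr, hpar⟩
    by_cases hrv : r = v
    · exact Or.inl hrv
    refine Or.inr ⟨(h.isRet_iff hr.1).mpr hr, fun a ha => hpar a ?_⟩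
    obtain ⟨-, w, x, hw, hx, -, -, -, harc⟩ := h
    have := hr.1
    grind
  have hfin : {r | Inret N' t r}.Finite := N'.verts.finite_toSet.subset fun r hr => hr.1.1
  calc inretCount N t ≤ (insert v {r | Inret N' t r}).ncard :=
        Set.ncard_le_ncard hsub (hfin.insert v)
    _ ≤ inretCount N' t + 1 := Set.ncard_insert_le v _

end LeafAddition

lemma IsNonTemporal.of_isLeafAddition_chain {t : ℕ → ℝ} :
    ∀ (l : ℕ) (M : ℕ → Network), (∀ i < l, IsLeafAddition (M i) (M (i + 1))) →
      IsNonTemporal (M l) t → IsNonTemporal (M 0) t ∧ inretCount (M 0) t ≤ inretCount (M l) t + l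
  | 0, M, _, ht => ⟨ht, le_rfl⟩
  | l + 1, M, hstep, ht => by
    obtain ⟨ht₁, hcount⟩ := of_isLeafAddition_chain l (fun i => M (i + 1))
      (fun i hi => hstep (i + 1) (by omega)) ht
    obtain ⟨u, v, h⟩ := hstep 0 (by omega)
    exact ⟨ht₁.of_isLeafAdditionOn h, by have := h.inretCount_le t; omega⟩

lemma IsHGTConsistent.inretCount_eq_zero {N : Network} {t : ℕ → ℝ}
    (ht : IsHGTConsistent N t) : inretCount N t = 0 := by
  have hempty : {r | Inret N t r} = ∅ := Set.eq_empty_of_forall_notMem fun r ⟨hr, hpar⟩ =>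
    let ⟨u, ⟨hu, he⟩, _⟩ := ht.2 r hr
    hpar u hu he
  rw [inretCount, hempty, Set.ncard_empty]

/-- The relation between a network `A` and its (reticulated) cherry reduction `B`, where `S`
is the set of vertices the reduction touches. -/
structure AgreeOff (A B : Network) (S : Set ℕ) : Prop where
  root_eq : A.root = B.root
  mem_iff : ∀ v ∉ S, v ∈ A.verts ↔ v ∈ B.verts
  arc_iff : ∀ a b, a ∉ S → b ∉ S → (A.arc a b = true ↔ B.arc a b = true)
  mem_of_arc_left : ∀ a b, a ∈ S → A.arc a b = true → b ∈ S
  mem_of_arc_right : ∀ a b, a ∈ S → B.arc a b = true → b ∈ S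
  exists_arc_left : ∀ a c, a ∉ S → c ∈ S → B.arc a c = true → ∃ d ∈ S, A.arc a d = true

namespace AgreeOff

variable {A B : Network} {S : Set ℕ} {a b : ℕ}

lemma arc_iff_of_notMem (h : AgreeOff A B S) (hb : b ∉ S) :
    A.arc a b = true ↔ B.arc a b = true := by
  by_cases ha : a ∈ S
  · exact iff_of_false (fun hab => hb (h.mem_of_arc_left a b ha hab))
      (fun hab => hb (h.mem_of_arc_right a b ha hab))
  · exact h.arc_iff a b ha hb

lemma isRet_iff (h : AgreeOff A B S) (hb : b ∉ S) : IsRet A b ↔ IsRet B b := by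
  simp only [isRet_iff_exists_ne_parents, h.arc_iff_of_notMem hb]

lemma notMem_of_arc (h : AgreeOff A B S) (hb : b ∉ S) (hab : A.arc a b = true) : a ∉ S :=
  fun ha => hb (h.mem_of_arc_left a b ha hab)

end AgreeOff

lemma AgreeOff.exists_arc_lt {A B : Network} {S : Set ℕ} {t t' : ℕ → ℝ} {a : ℕ}
    (h : AgreeOff A B S) (ht' : IsNonTemporal B t') (hteq : ∀ v ∉ S, t v = t' v)
    (ha : IsInternal A a) (hS : ∀ c ∈ S, A.arc a c ≠ true) :
    ∃ d, A.arc a d = true ∧ t a < t d := by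
  obtain ⟨c, hac⟩ := ha.exists_arc
  have hc : c ∉ S := fun hc => hS c hc hac
  have haS := h.notMem_of_arc hc hac
  have haB : IsInternal B a := ⟨(h.mem_iff a haS).mp ha.1, h.root_eq ▸ ha.2.1,
    fun hl => hl.not_arc ((h.arc_iff_of_notMem hc).mp hac)⟩
  obtain ⟨d, hd, hlt⟩ := ht'.2.2.1 a haB
  have hdS : d ∉ S := fun hdS => by
    obtain ⟨e, he, hae⟩ := h.exists_arc_left a d haS hdS hd
    exact hS e he hae
  refine ⟨d, (h.arc_iff_of_notMem hdS).mpr hd, ?_⟩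
  rwa [hteq a haS, hteq d hdS]

lemma isHGTConsistent_of_existsUnique {N : Network} {t : ℕ → ℝ}
    (hle : ∀ a b, N.arc a b = true → t a ≤ t b)
    (hret : ∀ a b, N.arc a b = true → t a = t b → IsRet N b)
    (hgrow : ∀ a, IsInternal N a → ∃ c, N.arc a c = true ∧ t a < t c)
    (huniq : ∀ r, IsRet N r → ∃! u, N.arc u r = true ∧ t u = t r) : IsHGTConsistent N t := by
  refine ⟨⟨hle, hret, hgrow, fun r a b hr ha hb hab ⟨har, hbr⟩ => hab ?_⟩, huniq⟩
  exact (huniq r hr).unique ⟨ha, har⟩ ⟨hb, hbr⟩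

theorem AgreeOff.isHGTConsistent {A B : Network} {S : Set ℕ} {t t' : ℕ → ℝ}
    (h : AgreeOff A B S) (ht' : IsHGTConsistent B t') (hteq : ∀ v ∉ S, t v = t' v)
    (harc : ∀ a b, A.arc a b = true → b ∈ S → t a < t b ∨ t a = t b ∧ IsRet A b)
    (hgrow : ∀ a c, A.arc a c = true → c ∈ S → ∃ d, A.arc a d = true ∧ t a < t d)
    (huniq : ∀ r ∈ S, IsRet A r → ∃! u, A.arc u r = true ∧ t u = t r) :
    IsHGTConsistent A t := by
  have hB : ∀ a b, A.arc a b = true → b ∉ S → B.arc a b = true ∧ t a = t' a ∧ t b = t' b :=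
    fun a b hab hb =>
      ⟨(h.arc_iff_of_notMem hb).mp hab, hteq a (h.notMem_of_arc hb hab), hteq b hb⟩
  refine isHGTConsistent_of_existsUnique (fun a b hab => ?_) (fun a b hab he => ?_)
    (fun a ha => ?_) (fun r hr => ?_)
  · by_cases hb : b ∈ S
    · rcases harc a b hab hb with hlt | ⟨he, -⟩
      exacts [hlt.le, he.le]
    · obtain ⟨hab', hta, htb⟩ := hB a b hab hb
      rw [hta, htb]
      exact ht'.1.1 a b hab'
  · by_cases hb : b ∈ S
    · rcases harc a b hab hb with hlt | ⟨-, hr⟩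
      exacts [absurd he hlt.ne, hr]
    · obtain ⟨hab', hta, htb⟩ := hB a b hab hb
      exact (h.isRet_iff hb).mpr (ht'.1.2.1 a b hab' (by rw [← hta, ← htb, he]))
  · by_cases hS : ∃ c ∈ S, A.arc a c = true
    · obtain ⟨c, hc, hac⟩ := hS
      exact hgrow a c hac hc
    · simp only [not_exists, not_and] at hS
      exact h.exists_arc_lt ht'.1 hteq ha hS
  · by_cases hrS : r ∈ S
    · exact huniq r hrS hr
    have hpar : ∀ u, (A.arc u r = true ∧ t u = t r) ↔ (B.arc u r = true ∧ t' u = t' r) :=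
      fun u => by
        rw [← h.arc_iff_of_notMem hrS]
        exact and_congr_right fun hu => by rw [hteq u (h.notMem_of_arc hrS hu), hteq r hrS]
    simpa only [hpar] using ht'.2 r ((h.isRet_iff hrS).mp hr)

structure IsCherryAt (A : Network) (x y p q : ℕ) : Prop where
  leaf_left : IsLeaf A x
  leaf_right : IsLeaf A y
  ne : x ≠ y
  arc_left : A.arc p x = true
  arc_right : A.arc p y = true
  arc_parent : A.arc q p = true

namespace IsCherryAt

variable {A B : Network} {x y p q a b : ℕ}

lemma isTreeVert (h : IsCherryAt A x y p q) : IsTreeVert A p :=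
  isTreeVert_of_arc_of_ne_children h.arc_parent h.arc_left h.arc_right h.ne

lemma eq_of_arc (h : IsCherryAt A x y p q) (hab : A.arc a b = true)
    (hb : b ∈ ({p, x, y} : Set ℕ)) : a = q ∧ b = p ∨ a = p ∧ (b = x ∨ b = y) := by
  simp only [Set.mem_insert_iff, Set.mem_singleton_iff] at hb
  rcases hb with rfl | rfl | rfl
  · exact Or.inl ⟨eq_of_inDeg_eq_one h.isTreeVert.2.1 hab h.arc_parent, rfl⟩
  · exact Or.inr ⟨eq_of_inDeg_eq_one h.leaf_left.2.1 hab h.arc_left, Or.inl rfl⟩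
  · exact Or.inr ⟨eq_of_inDeg_eq_one h.leaf_right.2.1 hab h.arc_right, Or.inr rfl⟩

lemma parent_notMem (h : IsCherryAt A x y p q) : q ∉ ({p, x, y} : Set ℕ) := by
  simp only [Set.mem_insert_iff, Set.mem_singleton_iff, not_or]
  exact ⟨ne_of_arc h.arc_parent, h.leaf_left.ne_of_arc h.arc_parent,
    h.leaf_right.ne_of_arc h.arc_parent⟩

lemma exists_isHGTConsistent (h : IsCherryAt A x y p q) (hAB : AgreeOff A B {p, x, y})
    {t' : ℕ → ℝ} (ht' : IsHGTConsistent B t') : ∃ t : ℕ → ℝ, IsHGTConsistent A t := by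
  have hq := h.parent_notMem
  simp only [Set.mem_insert_iff, Set.mem_singleton_iff, not_or] at hq
  have hpx := ne_of_arc h.arc_left
  have hpy := ne_of_arc h.arc_right
  let t : ℕ → ℝ := fun v => if v = p then t' q + 1 else if v = x ∨ v = y then t' q + 2 else t' v
  have hlt : ∀ a b, A.arc a b = true → b ∈ ({p, x, y} : Set ℕ) → t a < t b := by
    intro a b hab hb
    rcases h.eq_of_arc hab hb with ⟨rfl, rfl⟩ | ⟨rfl, rfl | rfl⟩
    · simp [t, hq]
    · simp [t, hpx.symm]
    · simp [t, hpy.symm]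
  refine ⟨t, hAB.isHGTConsistent ht' (fun v hv => ?_) (fun a b hab hb => Or.inl (hlt a b hab hb))
    (fun a c hac hc => ⟨c, hac, hlt a c hac hc⟩) (fun r hr hret => ?_)⟩
  · simp only [Set.mem_insert_iff, Set.mem_singleton_iff, not_or] at hv
    simp [t, hv.1, hv.2.1, hv.2.2]
  · simp only [Set.mem_insert_iff, Set.mem_singleton_iff] at hr
    rcases hr with rfl | rfl | rfl
    exacts [absurd hret h.isTreeVert.not_isRet, absurd hret h.leaf_left.not_isRet,
      absurd hret h.leaf_right.not_isRet]

end IsCherryAt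

lemma ReducesCherry.agreeOff {A B : Network} {x y p : ℕ} (h : ReducesCherry A B x y)
    (hpx : A.arc p x = true) : AgreeOff A B {p, x, y} := by
  obtain ⟨p', q, hx, hy, hxy, hp'x, hp'y, hqp, hverts, hroot, harc⟩ := h
  obtain rfl : p' = p := eq_of_inDeg_eq_one hx.2.1 hp'x hpx
  have hC : IsCherryAt A x y p' q := ⟨hx, hy, hxy, hp'x, hp'y, hqp⟩
  have hq := hC.parent_notMem
  refine ⟨hroot.symm, fun v hv => ?_, fun a b ha hb => ?_, fun a b ha hab => ?_,
    fun a b ha hab => ?_, fun a c ha hc hac => ⟨p', by simp, ?_⟩⟩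
  · simp only [Set.mem_insert_iff, Set.mem_singleton_iff, not_or] at hv
    simp [hverts, hv.1, hv.2.1]
  · simp only [Set.mem_insert_iff, Set.mem_singleton_iff, not_or] at ha hb
    simp [harc, ha.1, hb.1, hb.2.1, hb.2.2]
  · simp only [Set.mem_insert_iff, Set.mem_singleton_iff] at ha ⊢
    rcases ha with rfl | rfl | rfl
    · exact Or.inr (eq_or_eq_of_outDeg_eq_two hC.isTreeVert.2.2 hp'x hp'y hxy hab)
    all_goals exact absurd hab (by assumption : IsLeaf A a).not_arc
  · rcases (harc a b).mp hab with ⟨hab, hap, -⟩ | ⟨rfl, -⟩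
    · simp only [Set.mem_insert_iff, Set.mem_singleton_iff] at ha
      rcases ha with rfl | rfl | rfl
      exacts [absurd rfl hap, absurd hab hx.not_arc, absurd hab hy.not_arc]
    · exact absurd ha hq
  · rcases (harc a c).mp hac with ⟨hac, hap, hcp, hcx⟩ | ⟨rfl, -⟩
    · rcases hC.eq_of_arc hac hc with ⟨-, rfl⟩ | ⟨rfl, -⟩
      exacts [absurd rfl hcp, absurd (by simp) ha]
    · exact hqp

lemma ReducesCherry.exists_isHGTConsistent {A B : Network} {x y : ℕ} (h : ReducesCherry A B x y)
    {t' : ℕ → ℝ} (ht' : IsHGTConsistent B t') : ∃ t : ℕ → ℝ, IsHGTConsistent A t := by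
  obtain ⟨p, q, hx, hy, hxy, hpx, hpy, hqp, -⟩ := id h
  exact IsCherryAt.exists_isHGTConsistent ⟨hx, hy, hxy, hpx, hpy, hqp⟩ (h.agreeOff hpx) ht'

structure IsRetCherryAt (A : Network) (x y px py z q : ℕ) : Prop where
  leaf_left : IsLeaf A x
  leaf_right : IsLeaf A y
  isRet : IsRet A px
  arc_left : A.arc px x = true
  arc_middle : A.arc py px = true
  arc_right : A.arc py y = true
  arc_other : A.arc z px = true
  ne : z ≠ py
  arc_parent : A.arc q py = true

namespace IsRetCherryAt

variable {A B : Network} {x y px py z q a b : ℕ}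

lemma ret_ne_right (h : IsRetCherryAt A x y px py z q) : px ≠ y :=
  fun he => h.leaf_right.not_isRet (he ▸ h.isRet)

lemma isTreeVert (h : IsRetCherryAt A x y px py z q) : IsTreeVert A py :=
  isTreeVert_of_arc_of_ne_children h.arc_parent h.arc_middle h.arc_right h.ret_ne_right

lemma eq_of_arc (h : IsRetCherryAt A x y px py z q) (hab : A.arc a b = true)
    (hb : b ∈ ({px, py, x, y} : Set ℕ)) :
    (a = py ∨ a = z) ∧ b = px ∨ a = q ∧ b = py ∨ a = px ∧ b = x ∨ a = py ∧ b = y := by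
  simp only [Set.mem_insert_iff, Set.mem_singleton_iff] at hb
  rcases hb with rfl | rfl | rfl | rfl
  · exact Or.inl ⟨h.isRet.eq_or_eq_of_arc h.arc_middle h.arc_other h.ne.symm hab, rfl⟩
  · exact Or.inr (Or.inl ⟨eq_of_inDeg_eq_one h.isTreeVert.2.1 hab h.arc_parent, rfl⟩)
  · exact Or.inr (Or.inr (Or.inl ⟨eq_of_inDeg_eq_one h.leaf_left.2.1 hab h.arc_left, rfl⟩))
  · exact Or.inr (Or.inr (Or.inr ⟨eq_of_inDeg_eq_one h.leaf_right.2.1 hab h.arc_right, rfl⟩))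

lemma other_notMem (h : IsRetCherryAt A x y px py z q) : z ∉ ({px, py, x, y} : Set ℕ) := by
  simp only [Set.mem_insert_iff, Set.mem_singleton_iff, not_or]
  exact ⟨ne_of_arc h.arc_other, h.ne, h.leaf_left.ne_of_arc h.arc_other,
    h.leaf_right.ne_of_arc h.arc_other⟩

lemma parent_notMem (h : IsRetCherryAt A x y px py z q) : q ∉ ({px, py, x, y} : Set ℕ) := by
  simp only [Set.mem_insert_iff, Set.mem_singleton_iff, not_or]
  refine ⟨fun he => ?_, ne_of_arc h.arc_parent, h.leaf_left.ne_of_arc h.arc_parent,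
    h.leaf_right.ne_of_arc h.arc_parent⟩
  subst he
  exact h.leaf_left.ne_of_arc h.arc_middle
    (eq_of_outDeg_eq_one h.isRet.outDeg_eq_one h.arc_parent h.arc_left)

lemma exists_label_extension (h : IsRetCherryAt A x y px py z q) (t' : ℕ → ℝ) :
    ∃ t : ℕ → ℝ, (∀ v ∉ ({px, py, x, y} : Set ℕ), t v = t' v) ∧ t py = t px ∧
      ∀ a b, A.arc a b = true → b ∈ ({px, py, x, y} : Set ℕ) → ¬ (a = py ∧ b = px) →
        t a < t b := by
  have hz := h.other_notMem
  have hq := h.parent_notMem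
  simp only [Set.mem_insert_iff, Set.mem_singleton_iff, not_or] at hz hq
  have hx : x ≠ px ∧ x ≠ py :=
    ⟨(ne_of_arc h.arc_left).symm, (h.leaf_left.ne_of_arc h.arc_middle).symm⟩
  have hy : y ≠ px ∧ y ≠ py := ⟨h.ret_ne_right.symm, (ne_of_arc h.arc_right).symm⟩
  set c := max (t' z) (t' q) + 1
  have hzc : t' z < c := by have := le_max_left (t' z) (t' q); linarith
  have hqc : t' q < c := by have := le_max_right (t' z) (t' q); linarith
  refine ⟨fun v => if v = px ∨ v = py then c else if v = x ∨ v = y then c + 1 else t' v,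
    fun v hv => ?_, by simp, fun a b hab hb hne => ?_⟩
  · simp only [Set.mem_insert_iff, Set.mem_singleton_iff, not_or] at hv
    simp [hv.1, hv.2.1, hv.2.2.1, hv.2.2.2]
  · rcases h.eq_of_arc hab hb with ⟨rfl | rfl, rfl⟩ | ⟨rfl, rfl⟩ | ⟨rfl, rfl⟩ | ⟨rfl, rfl⟩
    · exact absurd ⟨rfl, rfl⟩ hne
    · simpa [hz] using hzc
    · simpa [hq] using hqc
    · simp [hx]
    · simp [hy]

lemma exists_isHGTConsistent (h : IsRetCherryAt A x y px py z q)
    (hAB : AgreeOff A B {px, py, x, y}) {t' : ℕ → ℝ} (ht' : IsHGTConsistent B t') :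
    ∃ t : ℕ → ℝ, IsHGTConsistent A t := by
  obtain ⟨t, hteq, hmid, hlt⟩ := h.exists_label_extension t'
  refine ⟨t, hAB.isHGTConsistent ht' hteq (fun a b hab hb => ?_) (fun a b hab hb => ?_)
    (fun r hr hr' => ?_)⟩
  · by_cases hne : a = py ∧ b = px
    · obtain ⟨rfl, rfl⟩ := hne
      exact Or.inr ⟨hmid, h.isRet⟩
    · exact Or.inl (hlt a b hab hb hne)
  · by_cases hne : a = py ∧ b = px
    · obtain ⟨rfl, rfl⟩ := hne
      exact ⟨y, h.arc_right, hlt a y h.arc_right (by simp) fun he => h.ret_ne_right he.2.symm⟩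
    · exact ⟨b, hab, hlt a b hab hb hne⟩
  · simp only [Set.mem_insert_iff, Set.mem_singleton_iff] at hr
    rcases hr with rfl | rfl | rfl | rfl
    · refine ⟨py, ⟨h.arc_middle, hmid⟩, fun u ⟨hu, he⟩ => ?_⟩
      refine (h.isRet.eq_or_eq_of_arc h.arc_middle h.arc_other h.ne.symm hu).resolve_right ?_
      rintro rfl
      exact (hlt u r hu (by simp) fun he => h.ne he.1).ne he
    exacts [absurd hr' h.isTreeVert.not_isRet, absurd hr' h.leaf_left.not_isRet,
      absurd hr' h.leaf_right.not_isRet]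

end IsRetCherryAt

lemma ReducesRetCherry.agreeOff {A B : Network} {x y px py : ℕ} (h : ReducesRetCherry A B x y)
    (hpxx : A.arc px x = true) (hpyy : A.arc py y = true) : AgreeOff A B {px, py, x, y} := by
  obtain ⟨px', py', z, q, hx, hy, hret, hpx'x, hpypx, hpy'y, hzpx, hzpy, hqpy, hverts, hroot,
    harc⟩ := h
  obtain rfl : px' = px := eq_of_inDeg_eq_one hx.2.1 hpx'x hpxx
  obtain rfl : py' = py := eq_of_inDeg_eq_one hy.2.1 hpy'y hpyy
  have hR : IsRetCherryAt A x y px' py' z q :=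
    ⟨hx, hy, hret, hpx'x, hpypx, hpy'y, hzpx, hzpy, hqpy⟩
  refine ⟨hroot.symm, fun v hv => ?_, fun a b ha hb => ?_, fun a b ha hab => ?_,
    fun a b ha hab => ?_, fun a c ha hc hac => ?_⟩
  · simp only [Set.mem_insert_iff, Set.mem_singleton_iff, not_or] at hv
    simp [hverts, hv.1, hv.2.1]
  · simp only [Set.mem_insert_iff, Set.mem_singleton_iff, not_or] at ha hb
    simp [harc, ha.1, ha.2.1, hb.1, hb.2.1, hb.2.2.1, hb.2.2.2]
  · simp only [Set.mem_insert_iff, Set.mem_singleton_iff] at ha ⊢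
    rcases ha with rfl | rfl | rfl | rfl
    · simp [eq_of_outDeg_eq_one hret.outDeg_eq_one hab hpx'x]
    · rcases eq_or_eq_of_outDeg_eq_two hR.isTreeVert.2.2 hpypx hpy'y hR.ret_ne_right hab with
        rfl | rfl <;> simp
    all_goals exact absurd hab (by assumption : IsLeaf A a).not_arc
  · rcases (harc a b).mp hab with ⟨hab, hapx, hapy, -⟩ | ⟨rfl, -⟩ | ⟨rfl, -⟩
    · simp only [Set.mem_insert_iff, Set.mem_singleton_iff] at ha
      rcases ha with rfl | rfl | rfl | rfl
      exacts [absurd rfl hapx, absurd rfl hapy, absurd hab hx.not_arc, absurd hab hy.not_arc]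
    exacts [absurd ha hR.other_notMem, absurd ha hR.parent_notMem]
  · rcases (harc a c).mp hac with ⟨hac, -, -, hcpx, hcpy⟩ | ⟨rfl, -⟩ | ⟨rfl, -⟩
    · rcases hR.eq_of_arc hac hc with ⟨-, rfl⟩ | ⟨-, rfl⟩ | ⟨rfl, -⟩ | ⟨rfl, -⟩
      exacts [absurd rfl hcpx, absurd rfl hcpy, absurd (by simp) ha, absurd (by simp) ha]
    · exact ⟨px', by simp, hzpx⟩
    · exact ⟨py', by simp, hqpy⟩

lemma ReducesRetCherry.exists_isHGTConsistent {A B : Network} {x y : ℕ}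
    (h : ReducesRetCherry A B x y) {t' : ℕ → ℝ} (ht' : IsHGTConsistent B t') :
    ∃ t : ℕ → ℝ, IsHGTConsistent A t := by
  obtain ⟨px, py, z, q, hx, hy, hret, hpxx, hpypx, hpyy, hzpx, hzpy, hqpy, -⟩ := id h
  exact IsRetCherryAt.exists_isHGTConsistent ⟨hx, hy, hret, hpxx, hpypx, hpyy, hzpx, hzpy, hqpy⟩
    (h.agreeOff hpxx hpyy) ht'

lemma IsSingleLeaf.exists_isHGTConsistent {N : Network} (h : IsSingleLeaf N) :
    ∃ t : ℕ → ℝ, IsHGTConsistent N t := by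
  obtain ⟨x, hxr, hverts⟩ := h
  have harc : ∀ a b, N.arc a b = true → a = N.root ∧ b = x := by
    intro a b hab
    obtain ⟨ha, hb⟩ := N.arc_mem _ _ hab
    simp only [hverts, Finset.mem_insert, Finset.mem_singleton] at ha hb
    rcases hb with rfl | rfl
    · exact absurd hab not_arc_root
    · exact ⟨ha.resolve_right (ne_of_arc hab), rfl⟩
  let t : ℕ → ℝ := fun v => if v = N.root then 0 else 1
  have hlt : ∀ a b, N.arc a b = true → t a < t b := fun a b hab => by
    obtain ⟨rfl, rfl⟩ := harc a b hab
    simp [t, hxr]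
  refine ⟨t, isHGTConsistent_of_existsUnique (fun a b hab => (hlt a b hab).le)
    (fun a b hab he => absurd he (hlt a b hab).ne) (fun a ha => ?_) fun r hr => ?_⟩
  · obtain ⟨c, hc⟩ := ha.exists_arc
    exact absurd (harc a c hc).1 ha.2.1
  · exact absurd hr (not_isRet_of_forall_parent_eq fun a ha => (harc a r ha).1)

theorem IsOrchard.exists_isHGTConsistent {N : Network} (h : IsOrchard N) :
    ∃ t : ℕ → ℝ, IsHGTConsistent N t := by
  obtain ⟨N', hsteps, hsingle⟩ := h
  induction hsteps using Relation.ReflTransGen.head_induction_on with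
  | refl => exact hsingle.exists_isHGTConsistent
  | head hstep _ ih =>
    obtain ⟨t, ht⟩ := ih
    obtain ⟨x, y, hc | hc⟩ := hstep
    exacts [hc.exists_isHGTConsistent ht, hc.exists_isHGTConsistent ht]

lemma VOR_le_of_reachableBy {N : Network} {k : ℕ}
    (h : ReachableBy IsLeafAddition N k IsOrchard) : VOR N ≤ k := by
  obtain ⟨M, rfl, hstep, horch⟩ := h
  obtain ⟨t, ht⟩ := horch.exists_isHGTConsistent
  obtain ⟨hnt, hcount⟩ := IsNonTemporal.of_isLeafAddition_chain k M hstep ht.1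
  rw [ht.inretCount_eq_zero] at hcount
  have hVOR : VOR (M 0) ≤ inretCount (M 0) t := Nat.sInf_le ⟨t, hnt, rfl⟩
  omega

lemma VOR_le_LOR {N : Network} (h : ∃ k, ReachableBy IsLeafAddition N k IsOrchard) :
    VOR N ≤ LOR N :=
  VOR_le_of_reachableBy (Nat.sInf_mem h)

/-- If an orchard network `M ℓ` is obtained from `N` by adding `ℓ`
leaves to reticulation arcs, then any HGT-consistent labelling of `M ℓ` restricts
to a non-temporal labelling of `N` with at most `ℓ` inrets; in particular
`V_OR(N) ≤ L_OR(N)`. -/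
theorem restriction_of_HGT_labelling (N : Network) (l : ℕ) (M : ℕ → Network)
    (h0 : M 0 = N)
    (hstep : ∀ i : ℕ, i < l → IsRetArcLeafAddition (M i) (M (i + 1)))
    (horch : IsOrchard (M l)) :
    (∀ t : ℕ → ℝ, IsHGTConsistent (M l) t →
      IsNonTemporal N t ∧ inretCount N t ≤ l) ∧
    VOR N ≤ LOR N := by
  have hadd : ∀ i < l, IsLeafAddition (M i) (M (i + 1)) := fun i hi =>
    let ⟨u, v, _, h⟩ := hstep i hi
    ⟨u, v, h⟩
  refine ⟨fun t ht => ?_, VOR_le_LOR ⟨l, M, h0, hadd, horch⟩⟩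
  subst h0
  simpa [ht.inretCount_eq_zero] using IsNonTemporal.of_isLeafAddition_chain l M hadd ht.1

end PhyloNet
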